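/- If A is a closed ∀⁺ type of system F, then A is an input type: for every normal λ-term t, if ⊢_F t : A then ⊢_{F₀} t : A. -/

import Mathlib

/-!
Common development: pure λ-calculus in de Bruijn notation, β-reduction,
weak head reduction, types of system F (with type constants), the typing
systems F, F₀ (F without (∀e)) and the simple system S, saturated sets and
interpretations, and the notions of input / output / data types, following
Farkh-Nour, "Les types de données syntaxiques du système F".
-/

namespace FarkhNour

/-- Pure λ-terms, in de Bruijn notation. -/
inductive Trm : Type
  | var : ℕ → Trm
  | app : Trm → Trm → Trm
  | lam : Trm → Trm

/-- Lift (shift) by `d` the free variables of a term, starting at index `k`. -/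
def liftTrm (d : ℕ) : ℕ → Trm → Trm
  | k, .var n => if n < k then .var n else .var (n + d)
  | k, .app a b => .app (liftTrm d k a) (liftTrm d k b)
  | k, .lam a => .lam (liftTrm d (k + 1) a)

/-- β-substitution `t[u/k]` (the binder for `k` is consumed: variables above `k`
are decremented), as used in the β-reduction rule. -/
def substTrm : Trm → ℕ → Trm → Trm
  | .var n, k, u => if n < k then .var n else if n = k then liftTrm k 0 u else .var (n - 1)
  | .app a b, k, u => .app (substTrm a k u) (substTrm b k u)
  | .lam a, k, u => .lam (substTrm a (k + 1) u)

/-- Named-style capture-avoiding substitution `t[u/x]` of the term `u` for the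
free variable `x` of `t` : the other free variables are left unchanged. -/
def replaceVar : Trm → ℕ → Trm → Trm
  | .var n, k, u => if n = k then u else .var n
  | .app a b, k, u => .app (replaceVar a k u) (replaceVar b k u)
  | .lam a, k, u => .lam (replaceVar a (k + 1) (liftTrm 1 0 u))

/-- Lifting of a parallel substitution under a binder. -/
def liftSub (σ : ℕ → Trm) : ℕ → Trm
  | 0 => .var 0
  | n + 1 => liftTrm 1 0 (σ n)

/-- Simultaneous (parallel) capture-avoiding substitution. -/
def msubst (σ : ℕ → Trm) : Trm → Trm
  | .var n => σ n
  | .app a b => .app (msubst σ a) (msubst σ b)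
  | .lam a => .lam (msubst (liftSub σ) a)

/-- One step of β-reduction. -/
inductive BetaStep : Trm → Trm → Prop
  | beta (t u : Trm) : BetaStep (.app (.lam t) u) (substTrm t 0 u)
  | appL {t t' : Trm} (u : Trm) : BetaStep t t' → BetaStep (.app t u) (.app t' u)
  | appR (t : Trm) {u u' : Trm} : BetaStep u u' → BetaStep (.app t u) (.app t u')
  | lam {t t' : Trm} : BetaStep t t' → BetaStep (.lam t) (.lam t')

/-- Many-step β-reduction `t →β t'`. -/
def BetaRed : Trm → Trm → Prop := Relation.ReflTransGen BetaStep

/-- β-equivalence `t ≃β t'`. -/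
def BetaEq : Trm → Trm → Prop := Relation.EqvGen BetaStep

/-- A term is normal iff no β-reduction step applies to it. -/
def IsNormal (t : Trm) : Prop := ∀ u, ¬ BetaStep t u

/-- `FreeIn k t` : the variable (de Bruijn index) `k` occurs free in `t`. -/
def FreeIn : ℕ → Trm → Prop
  | k, .var n => n = k
  | k, .app a b => FreeIn k a ∨ FreeIn k b
  | k, .lam a => FreeIn (k + 1) a

/-- A closed term. -/
def TrmClosed (t : Trm) : Prop := ∀ k, ¬ FreeIn k t

/-- One step of weak head reduction. -/
inductive WHStep : Trm → Trm → Prop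
  | beta (t u : Trm) : WHStep (.app (.lam t) u) (substTrm t 0 u)
  | app {t t' : Trm} (u : Trm) : WHStep t t' → WHStep (.app t u) (.app t' u)

/-- Weak head reduction `t ≻_f t'`. -/
def WHRed : Trm → Trm → Prop := Relation.ReflTransGen WHStep

/-- Types of system F, in de Bruijn notation, with type constants
(the constant `0` is the distinguished constant `O`, the constant `1` is `⊥`). -/
inductive Ty : Type
  | var : ℕ → Ty
  | const : ℕ → Ty
  | arr : Ty → Ty → Ty
  | all : Ty → Ty

/-- The distinguished type constant `O`. -/
def tyO : Ty := .const 0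

/-- The distinguished type constant `⊥`. -/
def tyBot : Ty := .const 1

/-- Lift (shift) by `d` the free type variables, starting at index `k`. -/
def liftTy (d : ℕ) : ℕ → Ty → Ty
  | k, .var n => if n < k then .var n else .var (n + d)
  | _, .const c => .const c
  | k, .arr a b => .arr (liftTy d k a) (liftTy d k b)
  | k, .all a => .all (liftTy d (k + 1) a)

/-- Capture-avoiding type substitution `A[G/k]`. -/
def substTy : Ty → ℕ → Ty → Ty
  | .var n, k, G => if n < k then .var n else if n = k then liftTy k 0 G else .var (n - 1)
  | .const c, _, _ => .const c
  | .arr a b, k, G => .arr (substTy a k G) (substTy b k G)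
  | .all a, k, G => .all (substTy a (k + 1) G)

/-- `TyFreeIn k A` : the type variable `k` occurs free in `A`. -/
def TyFreeIn : ℕ → Ty → Prop
  | k, .var n => n = k
  | _, .const _ => False
  | k, .arr a b => TyFreeIn k a ∨ TyFreeIn k b
  | k, .all a => TyFreeIn (k + 1) a

/-- Boolean version of `TyFreeIn`. -/
def tyFreeInB : ℕ → Ty → Bool
  | k, .var n => n == k
  | _, .const _ => false
  | k, .arr a b => tyFreeInB k a || tyFreeInB k b
  | k, .all a => tyFreeInB (k + 1) a

/-- A closed type. -/
def TyClosed (A : Ty) : Prop := ∀ k, ¬ TyFreeIn k A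

/-- `ContainsConst c A` : the type constant `c` occurs in `A`. -/
def ContainsConst : ℕ → Ty → Prop
  | _, .var _ => False
  | c, .const c' => c' = c
  | c, .arr a b => ContainsConst c a ∨ ContainsConst c b
  | c, .all a => ContainsConst c a

/-- The typing judgment `Γ ⊢_F t : A` of system F, with rules
(ax), (→i), (→e), (∀i), (∀e). -/
inductive TypF : List Ty → Trm → Ty → Prop
  | var (Γ : List Ty) (n : ℕ) (A : Ty) : Γ[n]? = some A → TypF Γ (.var n) A
  | abs {Γ : List Ty} {t : Trm} {B C : Ty} :
      TypF (B :: Γ) t C → TypF Γ (.lam t) (.arr B C)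
  | app {Γ : List Ty} {u v : Trm} {B C : Ty} :
      TypF Γ u (.arr B C) → TypF Γ v B → TypF Γ (.app u v) C
  | allI {Γ : List Ty} {t : Trm} {A : Ty} :
      TypF (Γ.map (liftTy 1 0)) t A → TypF Γ t (.all A)
  | allE {Γ : List Ty} {t : Trm} {A : Ty} (G : Ty) :
      TypF Γ t (.all A) → TypF Γ t (substTy A 0 G)

/-- The typing judgment `Γ ⊢_{F₀} t : A` of system F₀, i.e. system F
without the rule (∀e). -/
inductive TypF0 : List Ty → Trm → Ty → Prop
  | var (Γ : List Ty) (n : ℕ) (A : Ty) : Γ[n]? = some A → TypF0 Γ (.var n) A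
  | abs {Γ : List Ty} {t : Trm} {B C : Ty} :
      TypF0 (B :: Γ) t C → TypF0 Γ (.lam t) (.arr B C)
  | app {Γ : List Ty} {u v : Trm} {B C : Ty} :
      TypF0 Γ u (.arr B C) → TypF0 Γ v B → TypF0 Γ (.app u v) C
  | allI {Γ : List Ty} {t : Trm} {A : Ty} :
      TypF0 (Γ.map (liftTy 1 0)) t A → TypF0 Γ t (.all A)

/-- The typing judgment `Γ ⊢_S t : A` of the simple type system S,
with rules (ax), (→i), (→e) only. -/
inductive TypS : List Ty → Trm → Ty → Prop
  | var (Γ : List Ty) (n : ℕ) (A : Ty) : Γ[n]? = some A → TypS Γ (.var n) A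
  | abs {Γ : List Ty} {t : Trm} {B C : Ty} :
      TypS (B :: Γ) t C → TypS Γ (.lam t) (.arr B C)
  | app {Γ : List Ty} {u v : Trm} {B C : Ty} :
      TypS Γ u (.arr B C) → TypS Γ v B → TypS Γ (.app u v) C

/-- Quantifier-free types (types of the simple type system S). -/
def QFree : Ty → Prop
  | .var _ => True
  | .const _ => True
  | .arr a b => QFree a ∧ QFree b
  | .all _ => False

/-- An input type : a closed type all of whose normal inhabitants are
typable in system F₀. -/
def IsInputType (E : Ty) : Prop :=
  TyClosed E ∧ ∀ t : Trm, IsNormal t → TypF [] t E → TypF0 [] t E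

/-- An output type : a closed type `S` not containing the constant `O` such
that for every normal term `t`, if `α : O ⊢_F t : S` then `α ∉ Fv(t)`. -/
def IsOutputType (S : Ty) : Prop :=
  TyClosed S ∧ ¬ ContainsConst 0 S ∧
    ∀ t : Trm, IsNormal t → TypF [tyO] t S → ¬ FreeIn 0 t

/-- A syntactical data type : a closed type which is both input and output. -/
def IsSyntacticalDataType (D : Ty) : Prop := IsInputType D ∧ IsOutputType D

mutual
  /-- The ∀⁺ types (positive quantifiers). -/
  inductive PosTy : Ty → Prop
    | var (n : ℕ) : PosTy (.var n)
    | arr {B A : Ty} : NegTy B → PosTy A → PosTy (.arr B A)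
    | all {A : Ty} : PosTy A → TyFreeIn 0 A → PosTy (.all A)
  /-- The ∀⁻ types (negative quantifiers). -/
  inductive NegTy : Ty → Prop
    | var (n : ℕ) : NegTy (.var n)
    | arr {B A : Ty} : PosTy B → NegTy A → NegTy (.arr B A)
end

/-- `EndsInConst c A` : the type `A` ends in the type constant `c`. -/
inductive EndsInConst : ℕ → Ty → Prop
  | base (c : ℕ) : EndsInConst c (.const c)
  | arr {c : ℕ} {A : Ty} (B : Ty) : EndsInConst c A → EndsInConst c (.arr B A)
  | all {c : ℕ} {A : Ty} : EndsInConst c A → EndsInConst c (.all A)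

/-- `EndsInVar k A` : the type `A` ends in the type variable `k`
(crossing a quantifier ∀X with X ≠ the variable is allowed). -/
inductive EndsInVar : ℕ → Ty → Prop
  | base (k : ℕ) : EndsInVar k (.var k)
  | arr {k : ℕ} {A : Ty} (B : Ty) : EndsInVar k A → EndsInVar k (.arr B A)
  | all {k : ℕ} {A : Ty} : EndsInVar (k + 1) A → EndsInVar k (.all A)

/-- The side condition of the restricted rule (∀e)_F : the body `A` of `∀X A`
(the variable X having index `k`) is of the form
`∀X₀(A₁ → ∀X₁(A₂ → … → ∀X_{n-1}(A_n → ∀X_n Y)…))` with `Y = X` or one of the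
`A_i` ending in `X`. -/
inductive FFForm : ℕ → Ty → Prop
  | base (k : ℕ) : FFForm k (.var k)
  | all {k : ℕ} {A : Ty} : FFForm (k + 1) A → FFForm k (.all A)
  | arrTail {k : ℕ} {C : Ty} (B : Ty) : FFForm k C → FFForm k (.arr B C)
  | arrHit {k : ℕ} {B C : Ty} : EndsInVar k B → (∃ j, EndsInVar j C) →
      FFForm k (.arr B C)

/-- The typing judgment of system F_F : system F where the rule (∀e) is
replaced by the restricted rule (∀e)_F. -/
inductive TypFF : List Ty → Trm → Ty → Prop
  | var (Γ : List Ty) (n : ℕ) (A : Ty) : Γ[n]? = some A → TypFF Γ (.var n) A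
  | abs {Γ : List Ty} {t : Trm} {B C : Ty} :
      TypFF (B :: Γ) t C → TypFF Γ (.lam t) (.arr B C)
  | app {Γ : List Ty} {u v : Trm} {B C : Ty} :
      TypFF Γ u (.arr B C) → TypFF Γ v B → TypFF Γ (.app u v) C
  | allI {Γ : List Ty} {t : Trm} {A : Ty} :
      TypFF (Γ.map (liftTy 1 0)) t A → TypFF Γ t (.all A)
  | allE {Γ : List Ty} {t : Trm} {A : Ty} (G : Ty) :
      FFForm 0 A → TypFF Γ t (.all A) → TypFF Γ t (substTy A 0 G)

/-- An output type of system F_F. -/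
def IsOutputTypeFF (S : Ty) : Prop :=
  TyClosed S ∧ ¬ ContainsConst 0 S ∧
    ∀ t : Trm, IsNormal t → TypFF [tyO] t S → ¬ FreeIn 0 t

/-- Saturated sets of λ-terms. -/
def Saturated (G : Set Trm) : Prop := ∀ t u : Trm, WHRed t u → u ∈ G → t ∈ G

/-- `G → G'` on sets of λ-terms. -/
def SetArr (G G' : Set Trm) : Set Trm := {u : Trm | ∀ t ∈ G, Trm.app u t ∈ G'}

/-- Extension of an interpretation by a set for the (de Bruijn) variable 0. -/
def consEnv (G : Set Trm) (I : ℕ → Set Trm) : ℕ → Set Trm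
  | 0 => G
  | n + 1 => I n

/-- The value `|A|_I` of a type in an interpretation (`C` interprets the
type constants, `I` the type variables). -/
def TyVal (C : ℕ → Set Trm) : Ty → (ℕ → Set Trm) → Set Trm
  | .var n, I => I n
  | .const c, _ => C c
  | .arr a b, I => SetArr (TyVal C a I) (TyVal C b I)
  | .all a, I => {t : Trm | ∀ G : Set Trm, Saturated G → t ∈ TyVal C a (consEnv G I)}

/-- `|A|` : the intersection of the values of `A` under all interpretations
by saturated sets. -/
def TyGlobal (A : Ty) : Set Trm :=
  {t : Trm | ∀ C I : ℕ → Set Trm, (∀ c, Saturated (C c)) → (∀ n, Saturated (I n)) →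
    t ∈ TyVal C A I}

/-- A data type in Krivine's sense : a closed type `A` with `|A| ≠ ∅` such that
every term of `|A|` β-reduces to a closed term. -/
def IsDataType (A : Ty) : Prop :=
  TyClosed A ∧ TyGlobal A ≠ ∅ ∧
    ∀ t ∈ TyGlobal A, ∃ t' : Trm, BetaRed t t' ∧ TrmClosed t'

/-- The product type `A ∧ B = ∀X((A → (B → X)) → X)` (X fresh). -/
def tyAnd (A B : Ty) : Ty :=
  .all (.arr (.arr (liftTy 1 0 A) (.arr (liftTy 1 0 B) (.var 0))) (.var 0))

/-- The disjoint sum type `A ∨ B = ∀X((A → X) → ((B → X) → X))` (X fresh). -/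
def tyOr (A B : Ty) : Ty :=
  .all (.arr (.arr (liftTy 1 0 A) (.var 0))
    (.arr (.arr (liftTy 1 0 B) (.var 0)) (.var 0)))

/-- The type `LA = ∀X(X → ((A → (X → X)) → X))` of lists of objects of `A`. -/
def tyList (A : Ty) : Ty :=
  .all (.arr (.var 0)
    (.arr (.arr (liftTy 1 0 A) (.arr (.var 0) (.var 0))) (.var 0)))

/-- Negation `¬A = A → ⊥`. -/
def tyNeg (A : Ty) : Ty := .arr A tyBot

/-- The Gödel translation `A*` : every atomic subformula `R` is replaced
by `¬R`. -/
def godel : Ty → Ty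
  | .var n => .arr (.var n) tyBot
  | .const c => .arr (.const c) tyBot
  | .arr a b => .arr (godel a) (godel b)
  | .all a => .all (godel a)

/-- `T` is a storage operator for the pair of types `(E, S)`. -/
def IsStorageOpPair (T : Trm) (E S : Ty) : Prop :=
  TrmClosed T ∧
    ∀ t : Trm, TypF [] t E →
      ∃ τ τ' : Trm, BetaEq τ τ' ∧ TypF [] τ' S ∧
        ∀ θ : Trm, BetaEq θ t →
          ∀ f : ℕ, ¬ FreeIn f θ → ¬ FreeIn f τ →
            ∃ σ : ℕ → Trm,
              WHRed (.app (.app T θ) (.var f)) (.app (.var f) (msubst σ τ))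

/-- `T` is a storage operator for the type `D`. -/
def IsStorageOp (T : Trm) (D : Ty) : Prop := IsStorageOpPair T D D

/-- The term `λx₁…λxₙ.α` (n-fold abstraction over the free variable `α`). -/
def nlam (n a : ℕ) : Trm := Trm.lam^[n] (Trm.var (a + n))

/-- The term `p_n = λx₁…λxₙλx.x`. -/
def pTrm (n : ℕ) : Trm := Trm.lam^[n] (Trm.lam (Trm.var 0))

/-- `B₁ → … → B_n → A`. -/
def mkArr (Bs : List Ty) (A : Ty) : Ty := Bs.foldr Ty.arr A

/-- The length `Lg(E)` of a type : the number of occurrences of `→` in it. -/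
def Lg : Ty → ℕ
  | .var _ => 0
  | .const _ => 0
  | .arr a b => Lg a + Lg b + 1
  | .all a => Lg a

/-- `SubtypeOf A E` : `A` is a subtype (subformula) of `E`. -/
inductive SubtypeOf : Ty → Ty → Prop
  | refl (A : Ty) : SubtypeOf A A
  | arrL {A B C : Ty} : SubtypeOf A B → SubtypeOf A (.arr B C)
  | arrR {A B C : Ty} : SubtypeOf A C → SubtypeOf A (.arr B C)
  | all {A B : Ty} : SubtypeOf A B → SubtypeOf A (.all B)

/-- `InAppPos k t` : the variable `k` occurs in application (function)
position in `t`, i.e. some subterm of `t` is of the form `(k)u`. -/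
def InAppPos : ℕ → Trm → Prop
  | _, .var _ => False
  | k, .app u v => u = .var k ∨ InAppPos k u ∨ InAppPos k v
  | k, .lam u => InAppPos (k + 1) u

/-- The simple translation `A^s` : `X^s = X`, `(B → C)^s = B^s → C^s`,
`(∀X B)^s = B^s` (the variables freed by erasing the quantifiers are collapsed
onto the type variable `0`). `d` counts the erased quantifiers. -/
def eraseTyAux : ℕ → Ty → Ty
  | d, .var n => .var (n - d)
  | _, .const c => .const c
  | d, .arr a b => .arr (eraseTyAux d a) (eraseTyAux d b)
  | d, .all a => eraseTyAux (d + 1) a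

/-- The simple translation `A^s`. -/
def eraseTy : Ty → Ty := eraseTyAux 0

/-- The identity term `λx.x`. -/
def idTrm : Trm := .lam (.var 0)

/-- The boolean `𝟙 = λxλy.x`. -/
def oneTrm : Trm := .lam (.lam (.var 1))

/-- The pair of λ-terms `(T_F, T'_F)` associated with a type `F` (the
distinguished variable `X` having de Bruijn index `k`; the term variable `α`
is the free term variable `0`):
`T_F = T'_F = λx.x` if `X ∉ Fv(F)`;
`T_X = λxλβλg.(g)xα`, `T'_X = λx.(x)α𝟙`;
`T_{C→D} = λxλy.(T_D)(x)(T'_C)y`, `T'_{C→D} = λxλy.(T'_D)(x)(T_C)y`;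
`T_{∀Y B} = λx.(T_B)x`, `T'_{∀Y B} = λx.(T'_B)x`. -/
def TTpair : ℕ → Ty → Trm × Trm
  | k, .var n =>
      if n = k then
        (.lam (.lam (.lam (.app (.app (.var 0) (.var 2)) (.var 3)))),
         .lam (.app (.app (.var 0) (.var 1)) oneTrm))
      else (idTrm, idTrm)
  | _, .const _ => (idTrm, idTrm)
  | k, .arr C D =>
      if tyFreeInB k (.arr C D) then
        (.lam (.lam (.app (liftTrm 2 0 (TTpair k D).1)
            (.app (.var 1) (.app (liftTrm 2 0 (TTpair k C).2) (.var 0))))),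
         .lam (.lam (.app (liftTrm 2 0 (TTpair k D).2)
            (.app (.var 1) (.app (liftTrm 2 0 (TTpair k C).1) (.var 0))))))
      else (idTrm, idTrm)
  | k, .all B =>
      if tyFreeInB k (.all B) then
        (.lam (.app (liftTrm 1 0 (TTpair (k + 1) B).1) (.var 0)),
         .lam (.app (liftTrm 1 0 (TTpair (k + 1) B).2) (.var 0)))
      else (idTrm, idTrm)


/-!
Generalize to contexts of ∀⁻ types and induct on the normal term. An F-derivation ends with
the (ax), (→i) or (→e) rule matching the term, followed by a chain of (∀i) and (∀e).

For an abstraction that rule yields an arrow type, so every (∀e) of the chain eliminates a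
quantifier introduced by a (∀i); such a pair is a substitution instance of the derivation and
can be removed. What remains is (→i) and (∀i), whose premises again have a ∀⁻ context
and a ∀⁺ type.

A term `(x)u₁…uₙ` has in F₀ a type `C` that is a tail of the ∀⁻ type of `x`. As `C` comes from
the context, every (∀i) above it is vacuous and every (∀e) only removes a vacuous quantifier,
so its F-types are `∀X₁…∀Xₖ C`. A ∀⁺ type binds a variable it contains, hence `k = 0`.
-/

@[simp] lemma liftTy_zero (d : ℕ) (A : Ty) : liftTy 0 d A = A := by
  induction A generalizing d <;> simp_all [liftTy]

lemma liftTy_liftTy (A : Ty) {d d' k m : ℕ} (h₁ : k ≤ m) (h₂ : m ≤ k + d') :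
    liftTy d m (liftTy d' k A) = liftTy (d + d') k A := by
  induction A generalizing k m with
  | var n =>
    simp only [liftTy]
    split_ifs <;> simp only [liftTy] <;> split_ifs <;> (try simp only [Ty.var.injEq]) <;> omega
  | const => rfl
  | arr a b iha ihb => simp [liftTy, iha h₁ h₂, ihb h₁ h₂]
  | all a ih => simp [liftTy, ih (Nat.succ_le_succ h₁) (by omega : m + 1 ≤ k + 1 + d')]

lemma liftTy_comm (A : Ty) {j k : ℕ} (d d' : ℕ) (h : j ≤ k) :
    liftTy d j (liftTy d' k A) = liftTy d' (k + d) (liftTy d j A) := by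
  induction A generalizing j k with
  | var n =>
    simp only [liftTy]
    split_ifs <;> simp only [liftTy] <;> split_ifs <;> (try simp only [Ty.var.injEq]) <;> omega
  | const => rfl
  | arr a b iha ihb => simp [liftTy, iha h, ihb h]
  | all a ih => simp [liftTy, ih (Nat.succ_le_succ h), Nat.add_right_comm]

lemma substTy_liftTy (A G : Ty) {d k m : ℕ} (h₁ : k ≤ m) (h₂ : m < k + d) :
    substTy (liftTy d k A) m G = liftTy (d - 1) k A := by
  induction A generalizing k m with
  | var n =>
    simp only [liftTy]
    split_ifs <;> simp only [substTy] <;> split_ifs <;> (try simp only [Ty.var.injEq]) <;> omega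
  | const => rfl
  | arr a b iha ihb => simp [liftTy, substTy, iha h₁ h₂, ihb h₁ h₂]
  | all a ih => simp [liftTy, substTy, ih (Nat.succ_le_succ h₁) (by omega : m + 1 < k + 1 + d)]

lemma substTy_liftTy_self (A G : Ty) (k : ℕ) : substTy (liftTy 1 k A) k G = A := by
  simp [substTy_liftTy A G le_rfl (by omega : k < k + 1)]

lemma substTy_liftTy_comm (A G : Ty) {c k : ℕ} (d : ℕ) (h : c ≤ k) :
    substTy (liftTy d c A) (d + k) G = liftTy d c (substTy A k G) := by
  induction A generalizing c k with
  | var n =>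
    simp only [liftTy, substTy]
    split_ifs <;> simp only [liftTy, substTy] <;> split_ifs <;>
      first
      | ((try simp only [Ty.var.injEq]) <;> omega)
      | (subst_vars; exact (liftTy_liftTy G (by omega) (by omega)).symm)
  | const => rfl
  | arr a b iha ihb => simp [liftTy, substTy, iha h, ihb h]
  | all a ih => simp [liftTy, substTy, ← ih (Nat.succ_le_succ h), Nat.add_assoc]

lemma substTy_substTy (A G G' : Ty) (j k : ℕ) :
    substTy (substTy A j G') (j + k) G
      = substTy (substTy A (j + k + 1) G) j (substTy G' k G) := by
  induction A generalizing j with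
  | var n =>
    simp only [substTy]
    split_ifs <;> (try simp only [substTy]) <;> (try split_ifs) <;> subst_vars <;>
      first
      | ((try simp only [Ty.var.injEq]) <;> omega)
      | exact substTy_liftTy_comm G' G j (Nat.zero_le k)
      | (rw [substTy_liftTy G _ (Nat.zero_le j) (by omega)]; rfl)
  | const => rfl
  | arr a b iha ihb => simp [substTy, iha, ihb]
  | all a ih => simpa [substTy, Nat.add_right_comm] using ih (j + 1)

lemma tyFreeIn_liftTy_iff_of_lt (A : Ty) {d j m : ℕ} (h : m < j) :
    TyFreeIn m (liftTy d j A) ↔ TyFreeIn m A := by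
  induction A generalizing j m with
  | var n =>
    simp only [liftTy]
    split_ifs
    · rfl
    · simp only [TyFreeIn]; omega
  | const => rfl
  | arr a b iha ihb => simp [liftTy, TyFreeIn, iha h, ihb h]
  | all a ih => simp [liftTy, TyFreeIn, ih (Nat.succ_lt_succ h)]

lemma not_tyFreeIn_liftTy (A : Ty) {d j m : ℕ} (h₁ : j ≤ m) (h₂ : m < j + d) :
    ¬ TyFreeIn m (liftTy d j A) := by
  induction A generalizing j m with
  | var n => simp only [liftTy]; split_ifs <;> simp only [TyFreeIn] <;> omega
  | const => exact id
  | arr a b iha ihb => simp [liftTy, TyFreeIn, iha h₁ h₂, ihb h₁ h₂]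
  | all a ih => simpa [liftTy, TyFreeIn] using ih (m := m + 1) (by omega) (by omega)

lemma tyFreeIn_iterate_all (A : Ty) (k m : ℕ) :
    TyFreeIn m (Ty.all^[k] A) ↔ TyFreeIn (m + k) A := by
  induction k generalizing m with
  | zero => rfl
  | succ k ih =>
    simp [Function.iterate_succ_apply', TyFreeIn, ih, Nat.add_right_comm, Nat.add_assoc]

lemma substTy_iterate_all (A G : Ty) (k j : ℕ) :
    substTy (Ty.all^[k] A) j G = Ty.all^[k] (substTy A (j + k) G) := by
  induction k generalizing j with
  | zero => rfl
  | succ k ih =>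
    simp [Function.iterate_succ_apply', substTy, ih, Nat.add_right_comm, Nat.add_assoc]

lemma posTy_arr_iff {B A : Ty} : PosTy (.arr B A) ↔ NegTy B ∧ PosTy A :=
  ⟨fun | .arr hB hA => ⟨hB, hA⟩, fun ⟨hB, hA⟩ => .arr hB hA⟩

lemma negTy_arr_iff {B A : Ty} : NegTy (.arr B A) ↔ PosTy B ∧ NegTy A :=
  ⟨fun | .arr hB hA => ⟨hB, hA⟩, fun ⟨hB, hA⟩ => .arr hB hA⟩

lemma posTy_all_iff {A : Ty} : PosTy (.all A) ↔ PosTy A ∧ TyFreeIn 0 A :=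
  ⟨fun | .all hA h => ⟨hA, h⟩, fun ⟨hA, h⟩ => .all hA h⟩

lemma not_negTy_all (A : Ty) : ¬ NegTy (.all A) := nofun

lemma posTy_negTy_liftTy_iff (A : Ty) (d m : ℕ) :
    (PosTy (liftTy d m A) ↔ PosTy A) ∧ (NegTy (liftTy d m A) ↔ NegTy A) := by
  induction A generalizing m with
  | var n => simp only [liftTy]; split_ifs <;> simp [PosTy.var, NegTy.var]
  | const => simp [liftTy]
  | arr a b iha ihb => simp [liftTy, posTy_arr_iff, negTy_arr_iff, iha, ihb]
  | all a ih =>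
    simp [liftTy, posTy_all_iff, not_negTy_all, ih,
      tyFreeIn_liftTy_iff_of_lt a (Nat.zero_lt_succ m)]

lemma negTy_liftTy_iff {A : Ty} {d m : ℕ} : NegTy (liftTy d m A) ↔ NegTy A :=
  (posTy_negTy_liftTy_iff A d m).2

/-- `Tail C T` : `T = B₁ → … → Bₙ → C`. -/
inductive Tail : Ty → Ty → Prop
  | refl (T : Ty) : Tail T T
  | arr {C A : Ty} (B : Ty) : Tail C A → Tail C (.arr B A)

lemma Tail.of_arr {B C T : Ty} (h : Tail (.arr B C) T) : Tail C T := by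
  induction h with
  | refl => exact .arr B (.refl C)
  | arr B' _ ih => exact .arr B' ih

lemma Tail.exists_of_liftTy {C T : Ty} {d m : ℕ} (h : Tail C (liftTy d m T)) :
    ∃ C₀, C = liftTy d m C₀ ∧ Tail C₀ T := by
  induction T generalizing C with
  | var n =>
    simp only [liftTy] at h
    split_ifs at h <;> cases h <;> exact ⟨_, by simp [liftTy, *], .refl _⟩
  | arr B A _ ihA =>
    cases h with
    | refl => exact ⟨_, rfl, .refl _⟩
    | arr _ h =>
      obtain ⟨C₀, rfl, h₀⟩ := ihA h
      exact ⟨C₀, rfl, .arr B h₀⟩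
  | _ => cases h; exact ⟨_, rfl, .refl _⟩

lemma NegTy.of_tail {C T : Ty} (hT : NegTy T) (h : Tail C T) : NegTy C := by
  induction h with
  | refl => exact hT
  | arr _ _ ih => exact ih (negTy_arr_iff.1 hT).2

def CtxNeg (Γ : List Ty) : Prop := ∀ T ∈ Γ, NegTy T

lemma CtxNeg.nil : CtxNeg [] := nofun

lemma CtxNeg.cons {B : Ty} {Γ : List Ty} (hB : NegTy B) (hΓ : CtxNeg Γ) : CtxNeg (B :: Γ) := by
  simpa [CtxNeg] using ⟨hB, hΓ⟩

lemma CtxNeg.map_liftTy {Γ : List Ty} (hΓ : CtxNeg Γ) (d m : ℕ) :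
    CtxNeg (Γ.map (liftTy d m)) := by
  simpa [CtxNeg, negTy_liftTy_iff] using hΓ

lemma map_substTy_map_liftTy (Γ : List Ty) (k : ℕ) (G : Ty) :
    (Γ.map (liftTy 1 0)).map (substTy · (k + 1) G)
      = (Γ.map (substTy · k G)).map (liftTy 1 0) := by
  simp only [List.map_map]
  refine List.map_congr_left fun T _ => ?_
  simpa [Nat.add_comm] using substTy_liftTy_comm T G 1 (Nat.zero_le k)

lemma typF_substTy {Γ : List Ty} {t : Trm} {A : Ty} (h : TypF Γ t A) (k : ℕ) (G : Ty) :
    TypF (Γ.map (substTy · k G)) t (substTy A k G) := by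
  induction h generalizing k with
  | var Γ n A hA => exact .var _ _ _ (by simp [hA])
  | abs _ ih => exact .abs (ih k)
  | app _ _ ihu ihv => exact .app (ihu k) (ihv k)
  | allI _ ih => exact .allI (map_substTy_map_liftTy .. ▸ ih (k + 1))
  | @allE _ _ A G' _ ih =>
    have hA := substTy_substTy A G G' 0 k
    simp only [Nat.zero_add] at hA
    exact hA ▸ (ih k).allE (substTy G' k G)

lemma typF0_substTy {Γ : List Ty} {t : Trm} {A : Ty} (h : TypF0 Γ t A) (k : ℕ) (G : Ty) :
    TypF0 (Γ.map (substTy · k G)) t (substTy A k G) := by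
  induction h generalizing k with
  | var Γ n A hA => exact .var _ _ _ (by simp [hA])
  | abs _ ih => exact .abs (ih k)
  | app _ _ ihu ihv => exact .app (ihu k) (ihv k)
  | allI _ ih => exact .allI (map_substTy_map_liftTy .. ▸ ih (k + 1))

lemma typF0_of_liftTy {Γ : List Ty} {t : Trm} {C : Ty}
    (h : TypF0 (Γ.map (liftTy 1 0)) t (liftTy 1 0 C)) : TypF0 Γ t C := by
  simpa [Function.comp_def, substTy_liftTy_self] using typF0_substTy h 0 C

inductive AllIntroElimClosure (P : List Ty → Ty → Prop) : List Ty → Ty → Prop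
  | base {Γ A} : P Γ A → AllIntroElimClosure P Γ A
  | allI {Γ B} :
      AllIntroElimClosure P (Γ.map (liftTy 1 0)) B → AllIntroElimClosure P Γ (.all B)
  | allE {Γ B} (G : Ty) :
      AllIntroElimClosure P Γ (.all B) → AllIntroElimClosure P Γ (substTy B 0 G)

inductive AllIntroClosure (P : List Ty → Ty → Prop) : List Ty → Ty → Prop
  | base {Γ A} : P Γ A → AllIntroClosure P Γ A
  | allI {Γ B} : AllIntroClosure P (Γ.map (liftTy 1 0)) B → AllIntroClosure P Γ (.all B)

/-- `Γ ⊢ t : A` is the conclusion of the rule (ax), (→i) or (→e) for the outermost constructor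
of `t`, with premises derivable in F. -/
def StructTyping : Trm → List Ty → Ty → Prop
  | .var n, Γ, A => Γ[n]? = some A
  | .app u v, Γ, A => ∃ B, TypF Γ u (.arr B A) ∧ TypF Γ v B
  | .lam u, Γ, A => ∃ B C, A = .arr B C ∧ TypF (B :: Γ) u C

lemma TypF.allIntroElimClosure {Γ : List Ty} {t : Trm} {A : Ty} (h : TypF Γ t A) :
    AllIntroElimClosure (StructTyping t) Γ A := by
  induction h with
  | var _ _ _ hA => exact .base hA
  | abs h _ => exact .base ⟨_, _, rfl, h⟩
  | app hu hv _ _ => exact .base ⟨_, hu, hv⟩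
  | allI _ ih => exact .allI ih
  | allE G _ ih => exact .allE G ih

lemma AllIntroClosure.substTy {P : List Ty → Ty → Prop}
    (hP : ∀ Δ k A G, P (Δ.map (liftTy 1 k)) A → P Δ (substTy A k G))
    {Γ : List Ty} {B : Ty} (h : AllIntroClosure P Γ B) :
    ∀ Δ k G, Γ = Δ.map (liftTy 1 k) → AllIntroClosure P Δ (substTy B k G) := by
  induction h with
  | base hp => rintro Δ k G rfl; exact .base (hP _ _ _ _ hp)
  | allI _ ih =>
    rintro Δ k G rfl
    refine .allI (ih (Δ.map (liftTy 1 0)) (k + 1) G ?_)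
    simp only [List.map_map]
    exact List.map_congr_left fun T _ => liftTy_comm T 1 1 (Nat.zero_le k)

lemma AllIntroElimClosure.allIntroClosure {P : List Ty → Ty → Prop}
    (hP : ∀ Δ k A G, P (Δ.map (liftTy 1 k)) A → P Δ (substTy A k G))
    (hP_all : ∀ Δ B, ¬ P Δ (.all B)) {Γ : List Ty} {A : Ty}
    (h : AllIntroElimClosure P Γ A) : AllIntroClosure P Γ A := by
  induction h with
  | base hp => exact .base hp
  | allI _ ih => exact .allI ih
  | allE G _ ih =>
    cases ih with
    | base hp => exact absurd hp (hP_all _ _)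
    | allI h => exact h.substTy hP _ 0 G rfl

def TailTyping (Γ : List Ty) (t : Trm) (C : Ty) : Prop :=
  TypF0 Γ t C ∧ ∃ T ∈ Γ, Tail C T

def HeadTyping (Γ : List Ty) (t : Trm) (A : Ty) : Prop :=
  ∃ k C, A = Ty.all^[k] (liftTy k 0 C) ∧ TailTyping Γ t C

lemma TailTyping.negTy {Γ : List Ty} {t : Trm} {C : Ty} (hΓ : CtxNeg Γ)
    (h : TailTyping Γ t C) : NegTy C :=
  let ⟨_, _, hT, hC⟩ := h
  (hΓ _ hT).of_tail hC

lemma TailTyping.headTyping {Γ : List Ty} {t : Trm} {C : Ty} (h : TailTyping Γ t C) :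
    HeadTyping Γ t C :=
  ⟨0, C, by simp, h⟩

lemma TailTyping.exists_of_liftTy {Γ : List Ty} {t : Trm} {C : Ty}
    (h : TailTyping (Γ.map (liftTy 1 0)) t C) :
    ∃ C₀, C = liftTy 1 0 C₀ ∧ TailTyping Γ t C₀ := by
  obtain ⟨hC, _, hT', hCT⟩ := h
  obtain ⟨T, hT, rfl⟩ := List.mem_map.1 hT'
  obtain ⟨C₀, rfl, hC₀⟩ := hCT.exists_of_liftTy
  exact ⟨C₀, rfl, typF0_of_liftTy hC, T, hT, hC₀⟩

lemma HeadTyping.allI {Γ : List Ty} {t : Trm} {B : Ty}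
    (h : HeadTyping (Γ.map (liftTy 1 0)) t B) : HeadTyping Γ t (.all B) := by
  obtain ⟨k, C, rfl, hC⟩ := h
  obtain ⟨C₀, rfl, hC₀⟩ := hC.exists_of_liftTy
  refine ⟨k + 1, C₀, ?_, hC₀⟩
  rw [Function.iterate_succ_apply', liftTy_liftTy C₀ le_rfl (Nat.zero_le 1)]

lemma HeadTyping.allE {Γ : List Ty} {t : Trm} {B : Ty} (hΓ : CtxNeg Γ)
    (h : HeadTyping Γ t (.all B)) (G : Ty) : HeadTyping Γ t (substTy B 0 G) := by
  obtain ⟨_ | k, C, hB, hC⟩ := h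
  · simp only [Function.iterate_zero_apply, liftTy_zero] at hB
    exact absurd (hB ▸ hC.negTy hΓ) (not_negTy_all B)
  · rw [Function.iterate_succ_apply', Ty.all.injEq] at hB
    refine ⟨k, C, ?_, hC⟩
    rw [hB, substTy_iterate_all, Nat.zero_add, substTy_liftTy C G (Nat.zero_le k) (by omega)]
    rfl

lemma HeadTyping.tailTyping_arr {Γ : List Ty} {t : Trm} {B C : Ty}
    (h : HeadTyping Γ t (.arr B C)) : TailTyping Γ t (.arr B C) := by
  obtain ⟨_ | k, C', hC', h⟩ := h
  · simpa [hC'] using h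
  · simp [Function.iterate_succ_apply'] at hC'

lemma HeadTyping.typF0_of_posTy {Γ : List Ty} {t : Trm} {A : Ty} (h : HeadTyping Γ t A)
    (hA : PosTy A) : TypF0 Γ t A := by
  obtain ⟨_ | k, C, rfl, hC, -⟩ := h
  · simpa using hC
  · rw [Function.iterate_succ_apply', posTy_all_iff, tyFreeIn_iterate_all, Nat.zero_add] at hA
    exact absurd hA.2 (not_tyFreeIn_liftTy C (Nat.zero_le k) (by omega))

lemma AllIntroElimClosure.headTyping {P : List Ty → Ty → Prop} {t : Trm}
    (hP : ∀ Δ A, CtxNeg Δ → P Δ A → TailTyping Δ t A) {Γ : List Ty} {A : Ty}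
    (h : AllIntroElimClosure P Γ A) (hΓ : CtxNeg Γ) : HeadTyping Γ t A := by
  induction h with
  | base hp => exact (hP _ _ hΓ hp).headTyping
  | allI _ ih => exact (ih (hΓ.map_liftTy 1 0)).allI
  | allE G _ ih => exact (ih hΓ).allE hΓ G

lemma IsNormal.of_lam {u : Trm} (h : IsNormal (.lam u)) : IsNormal u :=
  fun _ hw => h _ hw.lam

lemma IsNormal.of_app {u v : Trm} (h : IsNormal (.app u v)) :
    IsNormal u ∧ IsNormal v ∧ ∀ w, u ≠ .lam w :=
  ⟨fun _ hw => h _ (hw.appL v), fun _ hw => h _ (hw.appR u),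
    by rintro w rfl; exact h _ (.beta w v)⟩

lemma headTyping_var {Γ : List Ty} {n : ℕ} {A : Ty} (hΓ : CtxNeg Γ)
    (h : TypF Γ (.var n) A) : HeadTyping Γ (.var n) A :=
  h.allIntroElimClosure.headTyping
    (fun _ _ _ hA => ⟨.var _ _ _ hA, _, List.mem_of_getElem? hA, .refl _⟩) hΓ

lemma headTyping_app {Γ : List Ty} {u v : Trm} {A : Ty}
    (hu : ∀ Γ A, CtxNeg Γ → TypF Γ u A → HeadTyping Γ u A)
    (hv : ∀ Γ A, CtxNeg Γ → PosTy A → TypF Γ v A → TypF0 Γ v A)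
    (hΓ : CtxNeg Γ) (h : TypF Γ (.app u v) A) : HeadTyping Γ (.app u v) A := by
  refine h.allIntroElimClosure.headTyping (fun Δ C hΔ ⟨B, huB, hvB⟩ => ?_) hΓ
  obtain ⟨huBC, T, hT, hTail⟩ := (hu Δ _ hΔ huB).tailTyping_arr
  have hB : PosTy B := (negTy_arr_iff.1 ((hΔ T hT).of_tail hTail)).1
  exact ⟨huBC.app (hv Δ B hΔ hB hvB), T, hT, hTail.of_arr⟩

lemma structTyping_lam_substTy (u : Trm) (Δ : List Ty) (k : ℕ) (A G : Ty)
    (h : StructTyping (.lam u) (Δ.map (liftTy 1 k)) A) :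
    StructTyping (.lam u) Δ (substTy A k G) := by
  obtain ⟨B, C, rfl, hC⟩ := h
  refine ⟨substTy B k G, substTy C k G, rfl, ?_⟩
  simpa [Function.comp_def, substTy_liftTy_self] using typF_substTy hC k G

lemma typF0_lam {Γ : List Ty} {u : Trm} {A : Ty}
    (hu : ∀ Γ A, CtxNeg Γ → PosTy A → TypF Γ u A → TypF0 Γ u A)
    (hΓ : CtxNeg Γ) (hA : PosTy A) (h : TypF Γ (.lam u) A) : TypF0 Γ (.lam u) A := by
  have hI := h.allIntroElimClosure.allIntroClosure (structTyping_lam_substTy u)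
    (fun _ _ ⟨_, _, h, _⟩ => Ty.noConfusion h)
  clear h
  induction hI with
  | base hp =>
    obtain ⟨B, C, rfl, hC⟩ := hp
    obtain ⟨hB, hC'⟩ := posTy_arr_iff.1 hA
    exact .abs (hu _ _ (hΓ.cons hB) hC' hC)
  | allI _ ih => exact .allI (ih (hΓ.map_liftTy 1 0) (posTy_all_iff.1 hA).1)

lemma typF0_of_typF_of_isNormal (t : Trm) (ht : IsNormal t) :
    (∀ Γ A, CtxNeg Γ → PosTy A → TypF Γ t A → TypF0 Γ t A) ∧
      ((∀ w, t ≠ .lam w) → ∀ Γ A, CtxNeg Γ → TypF Γ t A → HeadTyping Γ t A) := by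
  induction t with
  | var n =>
    exact ⟨fun _ _ hΓ hA h => (headTyping_var hΓ h).typF0_of_posTy hA,
      fun _ _ _ hΓ h => headTyping_var hΓ h⟩
  | app u v ihu ihv =>
    obtain ⟨hu, hv, hu_ne⟩ := ht.of_app
    have head : ∀ Γ A, CtxNeg Γ → TypF Γ (.app u v) A → HeadTyping Γ (.app u v) A :=
      fun _ _ hΓ h => headTyping_app ((ihu hu).2 hu_ne) (ihv hv).1 hΓ h
    exact ⟨fun Γ A hΓ hA h => (head Γ A hΓ h).typF0_of_posTy hA, fun _ => head⟩
  | lam u ihu =>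
    exact ⟨fun _ _ hΓ hA h => typF0_lam (ihu ht.of_lam).1 hΓ hA h, fun h => absurd rfl (h u)⟩

/-- a closed ∀⁺ type of system F is an input type : for every
normal term `t`, `⊢_F t : A` implies `⊢_{F₀} t : A`. -/
theorem pos_type_is_input_type (A : Ty) (hA : PosTy A) (hC : TyClosed A) :
    IsInputType A :=
  ⟨hC, fun t ht h => (typF0_of_typF_of_isNormal t ht).1 [] A .nil hA h⟩

end FarkhNour
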